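/- For every integer n ≥ 1, every p̄ ∈ (0,1) and every real u with p̄ < u ≤ (n−1)/n: n·K(u, p̄) + 1 ≥ (1−p̄)/(4·(1−u)). -/

import Mathlib

/-!
Write `s = 1 - u`; the hypothesis on `u` says `n s ≥ 1`, so `n K(u, p̄) ≥ K(u, p̄) / s` and it
suffices that `K(u, p̄) ≥ (1 - p̄)/4 - s`. Splitting `K(u, p̄) = u log u - u log p̄ + s log (s/(1-p̄))`,
the three terms are at least `u - 1`, `u (1 - p̄)` and `-(1 - p̄)/2`, which gives the bound once
`u ≥ 3/4`; for smaller `u` the bound is negative and `K ≥ 0` suffices.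
-/

/-- Bernoulli Kullback–Leibler divergence `K(u, p̄)`, with the convention `0·log 0 = 0`
(automatic since `Real.log 0 = 0`). -/
noncomputable def bernKL (u p : ℝ) : ℝ :=
  u * Real.log (u / p) + (1 - u) * Real.log ((1 - u) / (1 - p))

open Real InformationTheory

lemma Real.log_le_half_self {y : ℝ} (hy : 0 < y) : log y ≤ y / 2 := by
  have hsqrt : log (√y) ≤ √y - 1 := log_le_sub_one_of_pos (sqrt_pos.2 hy)
  rw [log_sqrt hy.le] at hsqrt
  nlinarith [sq_sqrt hy.le, sq_nonneg (√y - 2)]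

lemma bernKL_eq_klFun {u p : ℝ} (hp0 : 0 < p) (hp1 : p < 1) :
    bernKL u p = p * klFun (u / p) + (1 - p) * klFun ((1 - u) / (1 - p)) := by
  have : 1 - p ≠ 0 := by linarith
  simp only [bernKL, klFun_apply]
  field_simp
  ring

lemma bernKL_nonneg {u p : ℝ} (hp0 : 0 < p) (hp1 : p < 1) (hu0 : 0 ≤ u) (hu1 : u ≤ 1) :
    0 ≤ bernKL u p := by
  rw [bernKL_eq_klFun hp0 hp1]
  have hup : 0 ≤ u / p := by positivity
  have hup' : 0 ≤ (1 - u) / (1 - p) := div_nonneg (by linarith) (by linarith)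
  have := mul_nonneg hp0.le (klFun_nonneg hup)
  have := mul_nonneg (sub_nonneg.2 hp1.le) (klFun_nonneg hup')
  linarith

lemma quarter_sub_le_bernKL {u p : ℝ} (hp0 : 0 < p) (hp1 : p < 1) (hu0 : 0 < u) (hu1 : u < 1) :
    (1 - p) / 4 - (1 - u) ≤ bernKL u p := by
  by_cases hu : u < 3 / 4
  · linarith [bernKL_nonneg hp0 hp1 hu0.le hu1.le]
  have hs : 0 < 1 - u := by linarith
  have hlog_u : u - 1 ≤ u * log u := self_sub_one_le_mul_log hu0.le
  have hlog_p : 1 - p ≤ -log p := by linarith [log_le_sub_one_of_pos hp0]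
  have hlog_s : -(1 - p) / 2 ≤ (1 - u) * log ((1 - u) / (1 - p)) := by
    have h := log_le_half_self (div_pos (by linarith : 0 < 1 - p) hs)
    rw [← inv_div (1 - p), log_inv]
    have : (1 - u) * ((1 - p) / (1 - u) / 2) = (1 - p) / 2 := by field_simp
    nlinarith [mul_le_mul_of_nonneg_left h hs.le]
  rw [bernKL, log_div hu0.ne' hp0.ne']
  nlinarith

theorem bernKL_lower_upper_tail_general (n : ℕ) (p u : ℝ) (hp : p ∈ Set.Ioo (0 : ℝ) 1)
    (hpu : p < u) (hu : u ≤ ((n : ℝ) - 1) / n) :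
    (1 - p) / (4 * (1 - u)) ≤ (n : ℝ) * bernKL u p + 1 := by
  obtain ⟨hp0, hp1⟩ := hp
  have hu0 : 0 < u := hp0.trans hpu
  have hn0 : (0 : ℝ) < n := by
    rcases n.eq_zero_or_pos with rfl | hn
    · simp at hu
      linarith
    · exact_mod_cast hn
  have hu1 : u < 1 := hu.trans_lt (by rw [div_lt_one hn0]; linarith)
  have hns : 1 ≤ n * (1 - u) := by
    rw [le_div_iff₀ hn0] at hu
    linarith
  have hK0 := bernKL_nonneg hp0 hp1 hu0.le hu1.le
  have hK := quarter_sub_le_bernKL hp0 hp1 hu0 hu1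
  rw [div_le_iff₀ (by linarith)]
  nlinarith [mul_nonneg (sub_nonneg.2 hns) hK0]

/-- For every integer `n ≥ 1`, `p̄ ∈ (0,1)` and real `u` with `p̄ < u ≤ (n−1)/n`:
`n·K(u, p̄) + 1 ≥ (1−p̄)/(4(1−u))`. -/
theorem bernKL_lower_upper_tail (n : ℕ) (hn : 1 ≤ n) (p u : ℝ) (hp : p ∈ Set.Ioo (0 : ℝ) 1)
    (hpu : p < u) (hu : u ≤ ((n : ℝ) - 1) / n) :
    (1 - p) / (4 * (1 - u)) ≤ (n : ℝ) * bernKL u p + 1 :=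
  bernKL_lower_upper_tail_general n p u hp hpu hu
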